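/- Let ε ∈ (0,1] and let A be an ε-differentially private algorithm on databases of fixed size k. Let A' be the algorithm that, on a database S of size n with k ≤ n/2, selects a sub-database T of k rows by sampling uniformly with repetition from S and outputs A(T). Then A' is (6k/n)·ε-differentially private: for all databases S, S' of size n differing in one row and all measurable output sets E, P[A'(S) ∈ E] ≤ e^{6kε/n} · P[A'(S') ∈ E]. -/
import Mathlib


open MeasureTheory
open scoped ENNReal

/-- Two databases (of the same size) are adjacent if they differ in at most one row. -/
def Adjacent {X : Type*} {m : ℕ} (S S' : Fin m → X) : Prop :=
  ∃ i, ∀ j, j ≠ i → S j = S' j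

/-- `ε`-differential privacy for a mechanism mapping size-`m` databases to measures. -/
def PureDP {X : Type*} {Ω : Type*} [MeasurableSpace Ω] {m : ℕ}
    (ε : ℝ) (A : (Fin m → X) → Measure Ω) : Prop :=
  ∀ S S' : Fin m → X, Adjacent S S' → ∀ E : Set Ω,
    A S E ≤ ENNReal.ofReal (Real.exp ε) * A S' E

/-- The subsampled mechanism: sample `k` rows with repetition uniformly from the
size-`n` database and run `A` on them. -/
noncomputable def subsample {X : Type*} {Ω : Type*} [MeasurableSpace Ω] {n k : ℕ}
    (A : (Fin k → X) → Measure Ω) (S : Fin n → X) : Measure Ω :=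
  ((Fintype.card (Fin k → Fin n) : ENNReal))⁻¹ • ∑ f : Fin k → Fin n, A (S ∘ f)

/-- Group privacy: if two databases agree off a finite set `D`, the outputs differ by
at most `exp (|D| ε)`. -/
lemma group_privacy {X : Type*} {Ω : Type*} [MeasurableSpace Ω] {k : ℕ}
    {ε : ℝ} {A : (Fin k → X) → Measure Ω} (hA : PureDP ε A) (E : Set Ω) :
    ∀ (D : Finset (Fin k)) (u v : Fin k → X), (∀ j ∉ D, u j = v j) →
      A u E ≤ (ENNReal.ofReal (Real.exp ε)) ^ D.card * A v E := by
  intro D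
  induction D using Finset.induction_on with
  | empty =>
      intro u v h
      have huv : u = v := funext fun j => h j (Finset.notMem_empty j)
      simp [huv]
  | @insert a D' ha ih =>
      intro u v h
      set w : Fin k → X := fun j => if j = a then v j else u j with hw
      have h1 : A u E ≤ ENNReal.ofReal (Real.exp ε) * A w E := by
        refine hA u w ⟨a, fun j hj => ?_⟩ E
        simp [hw, hj]
      have h2 : A w E ≤ (ENNReal.ofReal (Real.exp ε)) ^ D'.card * A v E := by
        refine ih w v fun j hj => ?_
        by_cases hja : j = a
        · simp [hw, hja]
        · have : j ∉ insert a D' := by simp [hja, hj]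
          simp [hw, hja, h j this]
      calc A u E ≤ ENNReal.ofReal (Real.exp ε) * A w E := h1
        _ ≤ ENNReal.ofReal (Real.exp ε) *
            ((ENNReal.ofReal (Real.exp ε)) ^ D'.card * A v E) := by
              exact mul_le_mul_right h2 _
        _ = (ENNReal.ofReal (Real.exp ε)) ^ (insert a D').card * A v E := by
              rw [Finset.card_insert_of_notMem ha, pow_succ]; ring

set_option maxHeartbeats 1000000 in
/-- The master counting identity used twice in the amplification argument. -/
lemma master_sum {n k : ℕ} (i : Fin n) (x : ℝ≥0∞)
    (B : (Fin k → Fin n) → ℝ≥0∞) :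
    ∑ f : Fin k → Fin n, ∑ g : Fin k → {y : Fin n // y ≠ i},
      x ^ (Finset.univ.filter (fun j => f j = i)).card *
        B (fun j => if f j = i then ((g j : Fin n)) else f j)
      = (x + (Fintype.card {y : Fin n // y ≠ i} : ℝ≥0∞)) ^ k *
        ∑ u : Fin k → {y : Fin n // y ≠ i}, B (fun j => (u j : Fin n)) := by
  set Y := {y : Fin n // y ≠ i} with hY
  let F : (Fin k → Fin n) × (Fin k → Y) → ℝ≥0∞ := fun q =>
    x ^ (Finset.univ.filter (fun j => q.1 j = i)).card *
      B (fun j => if q.1 j = i then ((q.2 j : Fin n)) else q.1 j)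
  let e : ((Fin k → Y) × (Fin k → Option Y)) ≃ ((Fin k → Fin n) × (Fin k → Y)) :=
  { toFun := fun p =>
      (fun j => (p.2 j).elim i fun _ => (p.1 j : Fin n),
       fun j => (p.2 j).elim (p.1 j) id),
    invFun := fun q =>
      (fun j => if h : q.1 j = i then q.2 j else ⟨q.1 j, h⟩,
       fun j => if q.1 j = i then none else some (q.2 j)),
    left_inv := by
      rintro ⟨u, o⟩
      refine Prod.ext (funext fun j => ?_) (funext fun j => ?_) <;>
        rcases ho : o j with _ | y <;> simp [ho, (u j).2]
    right_inv := by
      rintro ⟨f, g⟩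
      refine Prod.ext (funext fun j => ?_) (funext fun j => ?_) <;>
        by_cases hf : f j = i <;> simp [hf] }
  have hFe : ∀ p : (Fin k → Y) × (Fin k → Option Y),
      F (e p) = x ^ (Finset.univ.filter (fun j => p.2 j = none)).card *
        B (fun j => (p.1 j : Fin n)) := by
    rintro ⟨u, o⟩
    have hcond : ∀ j, ((o j).elim i fun _ => (u j : Fin n)) = i ↔ o j = none := by
      intro j
      rcases ho : o j with _ | y <;> simp [ho, (u j).2]
    have hfilter : (Finset.univ.filter
        (fun j => ((o j).elim i fun _ => (u j : Fin n)) = i)) =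
        Finset.univ.filter (fun j => o j = none) :=
      Finset.filter_congr fun j _ => hcond j
    have hpatch : (fun j => if ((o j).elim i fun _ => (u j : Fin n)) = i
        then (((o j).elim (u j) id : Y) : Fin n)
        else ((o j).elim i fun _ => (u j : Fin n))) = fun j => (u j : Fin n) := by
      funext j
      rcases ho : o j with _ | y <;> simp [ho, (u j).2]
    simp only [F, e, Equiv.coe_fn_mk]
    rw [hfilter, hpatch]
  have hcount : ∑ o : Fin k → Option Y,
      x ^ (Finset.univ.filter (fun j => o j = none)).card
      = (x + (Fintype.card Y : ℝ≥0∞)) ^ k := by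
    have h1 : ∀ o : Fin k → Option Y,
        x ^ (Finset.univ.filter (fun j => o j = none)).card
        = ∏ j : Fin k, (if o j = none then x else 1) := by
      intro o
      rw [Finset.prod_ite, Finset.prod_const, Finset.prod_const_one, mul_one]
    simp_rw [h1]
    have h2 : (Finset.univ : Finset (Fin k → Option Y)) =
        Fintype.piFinset (fun _ => Finset.univ) := (Fintype.piFinset_univ).symm
    rw [h2]
    have hps := Finset.prod_univ_sum (fun _ : Fin k => (Finset.univ : Finset (Option Y)))
      (fun _ y => if y = none then x else (1 : ℝ≥0∞))
    rw [← hps]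
    have h3 : ∀ j : Fin k, (∑ y : Option Y, (if y = none then x else 1))
        = x + (Fintype.card Y : ℝ≥0∞) := by
      intro j
      rw [univ_option, Finset.sum_insertNone]
      simp [Finset.sum_const, Finset.card_univ, nsmul_eq_mul, mul_one]
    calc (∏ j : Fin k, ∑ y : Option Y, (if y = none then x else 1))
        = ∏ j : Fin k, (x + (Fintype.card Y : ℝ≥0∞)) :=
          Finset.prod_congr rfl fun j _ => h3 j
      _ = (x + (Fintype.card Y : ℝ≥0∞)) ^ k := by
          rw [Finset.prod_const, Finset.card_univ, Fintype.card_fin]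
  calc ∑ f : Fin k → Fin n, ∑ g : Fin k → Y,
        x ^ (Finset.univ.filter (fun j => f j = i)).card *
          B (fun j => if f j = i then ((g j : Fin n)) else f j)
      = ∑ q : (Fin k → Fin n) × (Fin k → Y), F q := (Fintype.sum_prod_type (f := F)).symm
    _ = ∑ p : (Fin k → Y) × (Fin k → Option Y), F (e p) := (Equiv.sum_comp e F).symm
    _ = ∑ p : (Fin k → Y) × (Fin k → Option Y),
          x ^ (Finset.univ.filter (fun j => p.2 j = none)).card *
            B (fun j => (p.1 j : Fin n)) := Finset.sum_congr rfl fun p _ => hFe p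
    _ = ∑ u : Fin k → Y, ∑ o : Fin k → Option Y,
          x ^ (Finset.univ.filter (fun j => o j = none)).card *
            B (fun j => (u j : Fin n)) :=
          Fintype.sum_prod_type (f := fun p : (Fin k → Y) × (Fin k → Option Y) =>
            x ^ (Finset.univ.filter (fun j => p.2 j = none)).card *
              B (fun j => (p.1 j : Fin n)))
    _ = ∑ u : Fin k → Y, (∑ o : Fin k → Option Y,
          x ^ (Finset.univ.filter (fun j => o j = none)).card) *
            B (fun j => (u j : Fin n)) := by
          refine Finset.sum_congr rfl fun u _ => ?_
          rw [Finset.sum_mul]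
    _ = (x + (Fintype.card Y : ℝ≥0∞)) ^ k *
          ∑ u : Fin k → Y, B (fun j => (u j : Fin n)) := by
          rw [Finset.mul_sum]
          exact Finset.sum_congr rfl fun u _ => by rw [hcount]

/-- The elementary real inequality behind the `6kε/n` constant. -/
lemma real_key_ineq (n k : ℕ) (hn2 : 2 ≤ n) (ε : ℝ) (hε0 : 0 < ε) (hε1 : ε ≤ 1) :
    (Real.exp ε + ((n : ℝ) - 1)) ^ k ≤
      Real.exp (6 * k / n * ε) * (Real.exp (-ε) + ((n : ℝ) - 1)) ^ k := by
  have hn2' : (2 : ℝ) ≤ (n : ℝ) := by exact_mod_cast hn2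
  have hnpos : (0 : ℝ) < n := by linarith
  -- e^ε ≤ 1 + ε + (3/4) ε²
  have hexp2 : Real.exp ε ≤ 1 + ε + 3 / 4 * ε ^ 2 := by
    have hb := Real.exp_bound (x := ε) (by rw [abs_of_nonneg hε0.le]; exact hε1)
      (n := 2) (by norm_num)
    have hsum : ∑ m ∈ Finset.range 2, ε ^ m / m.factorial = 1 + ε := by
      simp [Finset.sum_range_succ]
    rw [hsum, abs_of_nonneg hε0.le] at hb
    have habs := (abs_le.mp hb).2
    norm_num [Nat.factorial] at habs
    nlinarith
  have hexpneg : 1 - ε ≤ Real.exp (-ε) := by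
    have := Real.add_one_le_exp (-ε); linarith
  have h3 : Real.exp ε - Real.exp (-ε) ≤ 3 * ε := by nlinarith
  -- base inequality
  have hbase : Real.exp ε + ((n : ℝ) - 1) ≤
      Real.exp (6 * ε / n) * (Real.exp (-ε) + ((n : ℝ) - 1)) := by
    have h4 : 1 + 6 * ε / n ≤ Real.exp (6 * ε / n) := by
      have := Real.add_one_le_exp (6 * ε / n); linarith
    have h5 : 3 * ε ≤ 6 * ε / n * ((n : ℝ) - 1) := by
      rw [div_mul_eq_mul_div, le_div_iff₀ hnpos]
      nlinarith
    have hpos : (0 : ℝ) ≤ Real.exp (-ε) + ((n : ℝ) - 1) := by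
      have := Real.exp_pos (-ε); linarith
    have e1 : (1 + 6 * ε / n) * (Real.exp (-ε) + ((n : ℝ) - 1)) ≤
        Real.exp (6 * ε / n) * (Real.exp (-ε) + ((n : ℝ) - 1)) :=
      mul_le_mul_of_nonneg_right h4 hpos
    have ha : (0 : ℝ) ≤ 6 * ε / n := by positivity
    nlinarith [mul_nonneg ha (Real.exp_pos (-ε)).le]
  have hLnn : (0 : ℝ) ≤ Real.exp ε + ((n : ℝ) - 1) := by
    have := Real.exp_pos ε; linarith
  calc (Real.exp ε + ((n : ℝ) - 1)) ^ k
      ≤ (Real.exp (6 * ε / n) * (Real.exp (-ε) + ((n : ℝ) - 1))) ^ k :=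
        pow_le_pow_left₀ hLnn hbase k
    _ = Real.exp (6 * ε / n) ^ k * (Real.exp (-ε) + ((n : ℝ) - 1)) ^ k := mul_pow _ _ _
    _ = Real.exp (6 * k / n * ε) * (Real.exp (-ε) + ((n : ℝ) - 1)) ^ k := by
        rw [← Real.exp_nat_mul]
        ring_nf

/-- Amplification by subsampling: if `A` is `ε`-DP on databases of size `k` and
`k ≤ n/2`, then the subsampled mechanism on databases of size `n` is `(6k/n)·ε`-DP. -/
theorem dp_amplification_by_subsampling
    {X : Type*} {Ω : Type*} [MeasurableSpace Ω] (n k : ℕ)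
    (hk : 0 < k) (hn : 0 < n) (hkn : 2 * k ≤ n)
    (ε : ℝ) (hε0 : 0 < ε) (hε1 : ε ≤ 1)
    (A : (Fin k → X) → Measure Ω) (hA : PureDP ε A) :
    PureDP ((6 * k / n) * ε) (subsample (n := n) A) := by
  intro S S' hadj E
  obtain ⟨i, hi⟩ := hadj
  have hn2 : 2 ≤ n := le_trans (by omega) hkn
  set Y := {y : Fin n // y ≠ i} with hY
  set eε := ENNReal.ofReal (Real.exp ε) with heε
  set eδ := ENNReal.ofReal (Real.exp (-ε)) with heδ
  set m := Fintype.card Y with hm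
  have hcard : m = n - 1 := by
    have : Fintype.card Y = Fintype.card (Fin n) - Fintype.card {y : Fin n // y = i} :=
      Fintype.card_subtype_compl _
    rw [hm, this, Fintype.card_subtype_eq, Fintype.card_fin]
  have hm1 : 1 ≤ m := by omega
  -- step 1
  have hstep1 : ∀ (f : Fin k → Fin n) (g : Fin k → Y),
      A (S ∘ f) E ≤ eε ^ (Finset.univ.filter (fun j => f j = i)).card *
        A (S' ∘ fun j => if f j = i then ((g j : Fin n)) else f j) E := by
    intro f g
    refine group_privacy hA E _ _ _ fun j hj => ?_
    have hfj : f j ≠ i := by simpa using hj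
    simp [Function.comp, if_neg hfj, hi (f j) hfj]
  -- step 2
  have hstep2 : ∀ (f : Fin k → Fin n) (g : Fin k → Y),
      eδ ^ (Finset.univ.filter (fun j => f j = i)).card *
        A (S' ∘ fun j => if f j = i then ((g j : Fin n)) else f j) E ≤ A (S' ∘ f) E := by
    intro f g
    have h := group_privacy hA E (Finset.univ.filter (fun j => f j = i))
      (S' ∘ fun j => if f j = i then ((g j : Fin n)) else f j) (S' ∘ f) (by
        intro j hj
        have hfj : f j ≠ i := by simpa using hj
        simp [Function.comp, if_neg hfj])
    have hδε : eδ * eε = 1 := by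
      rw [heδ, heε, ← ENNReal.ofReal_mul (Real.exp_nonneg _), ← Real.exp_add]
      simp
    calc eδ ^ (Finset.univ.filter (fun j => f j = i)).card *
          A (S' ∘ fun j => if f j = i then ((g j : Fin n)) else f j) E
        ≤ eδ ^ (Finset.univ.filter (fun j => f j = i)).card *
          (eε ^ (Finset.univ.filter (fun j => f j = i)).card * A (S' ∘ f) E) :=
          mul_le_mul_right h _
      _ = (eδ * eε) ^ (Finset.univ.filter (fun j => f j = i)).card * A (S' ∘ f) E := by
          rw [mul_pow]; ring
      _ = A (S' ∘ f) E := by rw [hδε, one_pow, one_mul]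
  -- sums
  have hconst : ∀ (c : ℝ≥0∞), (∑ _g : Fin k → Y, c) = (m : ℝ≥0∞) ^ k * c := by
    intro c
    rw [Finset.sum_const, Finset.card_univ, Fintype.card_fun, Fintype.card_fin,
      nsmul_eq_mul, Nat.cast_pow]
  have hsum1 : (m : ℝ≥0∞) ^ k * ∑ f : Fin k → Fin n, A (S ∘ f) E ≤
      (eε + (m : ℝ≥0∞)) ^ k * ∑ u : Fin k → Y, A (S' ∘ fun j => (u j : Fin n)) E := by
    calc (m : ℝ≥0∞) ^ k * ∑ f : Fin k → Fin n, A (S ∘ f) E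
        = ∑ f : Fin k → Fin n, ∑ _g : Fin k → Y, A (S ∘ f) E := by
          rw [Finset.mul_sum]
          exact Finset.sum_congr rfl fun f _ => (hconst _).symm
      _ ≤ ∑ f : Fin k → Fin n, ∑ g : Fin k → Y,
            eε ^ (Finset.univ.filter (fun j => f j = i)).card *
              A (S' ∘ fun j => if f j = i then ((g j : Fin n)) else f j) E :=
          Finset.sum_le_sum fun f _ => Finset.sum_le_sum fun g _ => hstep1 f g
      _ = (eε + (m : ℝ≥0∞)) ^ k * ∑ u : Fin k → Y, A (S' ∘ fun j => (u j : Fin n)) E :=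
          master_sum i eε (fun v => A (S' ∘ v) E)
  have hsum2 : (eδ + (m : ℝ≥0∞)) ^ k * ∑ u : Fin k → Y, A (S' ∘ fun j => (u j : Fin n)) E ≤
      (m : ℝ≥0∞) ^ k * ∑ f : Fin k → Fin n, A (S' ∘ f) E := by
    calc (eδ + (m : ℝ≥0∞)) ^ k * ∑ u : Fin k → Y, A (S' ∘ fun j => (u j : Fin n)) E
        = ∑ f : Fin k → Fin n, ∑ g : Fin k → Y,
            eδ ^ (Finset.univ.filter (fun j => f j = i)).card *
              A (S' ∘ fun j => if f j = i then ((g j : Fin n)) else f j) E :=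
          (master_sum i eδ (fun v => A (S' ∘ v) E)).symm
      _ ≤ ∑ f : Fin k → Fin n, ∑ _g : Fin k → Y, A (S' ∘ f) E :=
          Finset.sum_le_sum fun f _ => Finset.sum_le_sum fun g _ => hstep2 f g
      _ = (m : ℝ≥0∞) ^ k * ∑ f : Fin k → Fin n, A (S' ∘ f) E := by
          rw [Finset.mul_sum]
          exact Finset.sum_congr rfl fun f _ => hconst _
  set K := ENNReal.ofReal (Real.exp (6 * (k : ℝ) / (n : ℝ) * ε)) with hK
  have hmr : ((m : ℝ≥0∞)) = ENNReal.ofReal ((n : ℝ) - 1) := by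
    rw [← ENNReal.ofReal_natCast m, hcard]
    congr 1
    push_cast [Nat.cast_sub (by omega : 1 ≤ n)]
    ring
  have hENN : (eε + (m : ℝ≥0∞)) ^ k ≤ K * (eδ + (m : ℝ≥0∞)) ^ k := by
    have hn1 : (0 : ℝ) ≤ (n : ℝ) - 1 := by
      have : (2 : ℝ) ≤ (n : ℝ) := by exact_mod_cast hn2
      linarith
    rw [hmr, heε, heδ, hK,
      ← ENNReal.ofReal_add (Real.exp_nonneg _) hn1,
      ← ENNReal.ofReal_add (Real.exp_nonneg _) hn1,
      ← ENNReal.ofReal_pow (by positivity),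
      ← ENNReal.ofReal_pow (by positivity),
      ← ENNReal.ofReal_mul (Real.exp_nonneg _)]
    exact ENNReal.ofReal_le_ofReal (real_key_ineq n k hn2 ε hε0 hε1)
  have hmain : ∑ f : Fin k → Fin n, A (S ∘ f) E ≤
      K * ∑ f : Fin k → Fin n, A (S' ∘ f) E := by
    have hchain : (m : ℝ≥0∞) ^ k * ∑ f : Fin k → Fin n, A (S ∘ f) E ≤
        (m : ℝ≥0∞) ^ k * (K * ∑ f : Fin k → Fin n, A (S' ∘ f) E) := by
      calc (m : ℝ≥0∞) ^ k * ∑ f : Fin k → Fin n, A (S ∘ f) E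
          ≤ (eε + (m : ℝ≥0∞)) ^ k *
              ∑ u : Fin k → Y, A (S' ∘ fun j => (u j : Fin n)) E := hsum1
        _ ≤ (K * (eδ + (m : ℝ≥0∞)) ^ k) *
              ∑ u : Fin k → Y, A (S' ∘ fun j => (u j : Fin n)) E :=
            mul_le_mul_left hENN _
        _ = K * ((eδ + (m : ℝ≥0∞)) ^ k *
              ∑ u : Fin k → Y, A (S' ∘ fun j => (u j : Fin n)) E) := by rw [mul_assoc]
        _ ≤ K * ((m : ℝ≥0∞) ^ k * ∑ f : Fin k → Fin n, A (S' ∘ f) E) :=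
            mul_le_mul_right hsum2 _
        _ = (m : ℝ≥0∞) ^ k * (K * ∑ f : Fin k → Fin n, A (S' ∘ f) E) := by ring
    have hm0 : ((m : ℝ≥0∞)) ^ k ≠ 0 :=
      pow_ne_zero _ (Nat.cast_ne_zero.mpr (by omega))
    exact (ENNReal.mul_le_mul_iff_right hm0 (by
      exact ENNReal.pow_ne_top (ENNReal.natCast_ne_top m))).mp hchain
  -- conclude
  show subsample A S E ≤ K * subsample A S' E
  rw [subsample, subsample, Measure.smul_apply, Measure.smul_apply,
    Measure.finset_sum_apply, Measure.finset_sum_apply, smul_eq_mul, smul_eq_mul]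
  calc (Fintype.card (Fin k → Fin n) : ℝ≥0∞)⁻¹ * ∑ f : Fin k → Fin n, A (S ∘ f) E
      ≤ (Fintype.card (Fin k → Fin n) : ℝ≥0∞)⁻¹ *
          (K * ∑ f : Fin k → Fin n, A (S' ∘ f) E) := mul_le_mul_right hmain _
    _ = K * ((Fintype.card (Fin k → Fin n) : ℝ≥0∞)⁻¹ *
          ∑ f : Fin k → Fin n, A (S' ∘ f) E) := by ring
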